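/- arXiv:1103.2877 — 2 statements merged into one kernel-verified Lean document; each statement's English description precedes it below -/
import Mathlib

section
/- The external product on nonempty antichains is commutative and associative, has neutral element {∅} and annihilating element ∅ (the empty antichain): α × {∅} = α and α × ∅ = ∅ for any antichain α. -/
open Finset

/-- Families of finite subsets of ℕ. -/
abbrev Fam := Finset (Finset ℕ)

/-- `α` is an antichain of subsets of `N`: all members are subsets of `N`
and no member is a (proper) subset of another. -/
def IsAC (N : Finset ℕ) (α : Fam) : Prop :=
  (∀ A ∈ α, A ⊆ N) ∧ ∀ A ∈ α, ∀ B ∈ α, A ⊆ B → A = B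

instance (N : Finset ℕ) : DecidablePred (IsAC N) := fun α => by
  unfold IsAC; infer_instance

/-- The partial order on antichains: every member of `α` is contained in some member of `β`. -/
def amle (α β : Fam) : Prop := ∀ A ∈ α, ∃ B ∈ β, A ⊆ B

instance (α β : Fam) : Decidable (amle α β) := by
  unfold amle; infer_instance

/-- `sup` of a family: its maximal elements under inclusion. -/
def maxels (S : Fam) : Fam := S.filter (fun A => ∀ B ∈ S, A ⊆ B → A = B)

/-- The span of an antichain: the union of its members. -/
def sp (α : Fam) : Finset ℕ := α.sup id

/-- Join: maximal elements of the union. -/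
def joinAC (α β : Fam) : Fam := maxels (α ∪ β)

/-- Meet: maximal elements of the pairwise intersections. -/
def meetAC (α β : Fam) : Fam := maxels ((α ×ˢ β).image fun p => p.1 ∩ p.2)

/-- Projection onto `M`: maximal elements of {A ∩ M : A ∈ α}. -/
def proj (M : Finset ℕ) (α : Fam) : Fam := maxels (α.image (· ∩ M))

/-- External product. -/
def xprod (α β : Fam) : Fam :=
  maxels ((α ×ˢ β).image fun p => (p.1 \ sp β) ∪ (p.2 \ sp α) ∪ (p.1 ∩ p.2))

/-- The finite set of all antichains of subsets of `N`. -/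
def AMTf (N : Finset ℕ) : Finset Fam := N.powerset.powerset.filter (IsAC N)

/-- The interval `[a, b]` inside `AMTf N`, as a `Finset`. -/
def intervalF (N : Finset ℕ) (a b : Fam) : Finset Fam :=
  (AMTf N).filter (fun κ => amle a κ ∧ amle κ b)

/-- The interval `[a, b]` of antichains of subsets of `N`, as a `Set`. -/
def intervalSet (N : Finset ℕ) (a b : Fam) : Set Fam :=
  {κ | IsAC N κ ∧ amle a κ ∧ amle κ b}

/-- n-ary join of a family indexed by the members of `σ`. -/
def bigJoin (σ : Fam) (κ : Finset ℕ → Fam) : Fam := maxels (σ.sup κ)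

/-- n-ary external product of a family indexed by the members of `σ`. -/
noncomputable def bigX (σ : Fam) (κ : Finset ℕ → Fam) : Fam :=
  (σ.toList.map κ).foldr xprod {(∅ : Finset ℕ)}

/-- Nonempty antichains of subsets of `S` with span exactly `S`. -/
def Upsf (S : Finset ℕ) : Finset Fam :=
  S.powerset.powerset.filter (fun κ => IsAC S κ ∧ κ ≠ ∅ ∧ sp κ = S)

/-!
Write `xprod α β` as the maximal elements of the image of `α ×ˢ β` under
`A ⋆ B = (A \ sp β) ∪ (B \ sp α) ∪ (A ∩ B)`. With the spans as parameters, `⋆` is commutative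
and satisfies `(A ⋆[P,Q] B) ⋆[P∪Q,S] C = A ⋆[P,Q∪S] (B ⋆[Q,S] C)` for arbitrary sets; the spans
match because `sp (α × β) = sp α ∪ sp β` for nonempty factors. Since `⋆` is monotone in both
arguments, taking maximal elements before or after the outer product gives the same result, so
both bracketings of a triple product are the maximal elements of one and the same family.
-/

section Combine

variable {ι : Type*} [DecidableEq ι]

def xprodCombine (P Q A B : Finset ι) : Finset ι := (A \ Q) ∪ (B \ P) ∪ (A ∩ B)

lemma xprodCombine_comm (P Q A B : Finset ι) :
    xprodCombine P Q A B = xprodCombine Q P B A := by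
  ext x
  simp only [xprodCombine, mem_union, mem_sdiff, mem_inter]
  tauto

lemma xprodCombine_assoc (P Q S A B C : Finset ι) :
    xprodCombine (P ∪ Q) S (xprodCombine P Q A B) C =
      xprodCombine P (Q ∪ S) A (xprodCombine Q S B C) := by
  ext x
  simp only [xprodCombine, mem_union, mem_sdiff, mem_inter]
  tauto

lemma xprodCombine_mono {P Q A A' B B' : Finset ι} (hA : A ⊆ A') (hB : B ⊆ B') :
    xprodCombine P Q A B ⊆ xprodCombine P Q A' B' := by
  unfold xprodCombine
  gcongr

lemma xprodCombine_subset_union (P Q A B : Finset ι) : xprodCombine P Q A B ⊆ A ∪ B := by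
  intro x
  simp only [xprodCombine, mem_union, mem_sdiff, mem_inter]
  tauto

lemma mem_xprodCombine_left {P Q A B : Finset ι} {x : ι} (hA : x ∈ A) (hB : x ∈ B ∨ x ∉ Q) :
    x ∈ xprodCombine P Q A B := by
  simp only [xprodCombine, mem_union, mem_sdiff, mem_inter]
  tauto

@[simp]
lemma xprodCombine_empty_right (P A : Finset ι) : xprodCombine P ∅ A ∅ = A := by
  simp [xprodCombine]

end Combine

section Maxels

variable {S T : Fam}

lemma mem_sp {α : Fam} {x : ℕ} : x ∈ sp α ↔ ∃ A ∈ α, x ∈ A := by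
  simp [sp, mem_sup]

lemma subset_sp {α : Fam} {A : Finset ℕ} (h : A ∈ α) : A ⊆ sp α :=
  fun _ hx => mem_sp.2 ⟨A, h, hx⟩

lemma amle_of_subset (h : S ⊆ T) : amle S T :=
  fun A hA => ⟨A, h hA, subset_rfl⟩

lemma maxels_subset (S : Fam) : maxels S ⊆ S := filter_subset _ _

lemma amle_maxels (S : Fam) : amle S (maxels S) := by
  intro A hA
  obtain ⟨B, hB, hmax⟩ := exists_max_image (S.filter (A ⊆ ·)) card ⟨A, by simp [hA]⟩
  rw [mem_filter] at hB
  refine ⟨B, mem_filter.2 ⟨hB.1, fun C hC hBC => ?_⟩, hB.2⟩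
  exact eq_of_subset_of_card_le hBC (hmax C (mem_filter.2 ⟨hC, hB.2.trans hBC⟩))

lemma sp_maxels (S : Fam) : sp (maxels S) = sp S := by
  refine subset_antisymm (sup_mono (maxels_subset S)) fun x hx => ?_
  obtain ⟨A, hA, hxA⟩ := mem_sp.1 hx
  obtain ⟨B, hB, hAB⟩ := amle_maxels S A hA
  exact mem_sp.2 ⟨B, hB, hAB hxA⟩

lemma maxels_eq_self (h : ∀ A ∈ S, ∀ B ∈ S, A ⊆ B → A = B) : maxels S = S :=
  filter_true_of_mem h

lemma mem_maxels_of_amle (hST : amle S T) (hTS : amle T S) {A : Finset ℕ}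
    (hA : A ∈ maxels S) : A ∈ maxels T := by
  simp only [maxels, mem_filter] at hA ⊢
  obtain ⟨hAS, hmax⟩ := hA
  obtain ⟨B, hB, hAB⟩ := hST A hAS
  obtain ⟨C, hC, hBC⟩ := hTS B hB
  have hBA : B ⊆ A := (hmax C hC (hAB.trans hBC)) ▸ hBC
  refine ⟨subset_antisymm hAB hBA ▸ hB, fun D hD hAD => ?_⟩
  obtain ⟨E, hE, hDE⟩ := hTS D hD
  exact subset_antisymm hAD (hmax E hE (hAD.trans hDE) ▸ hDE)

lemma maxels_congr_of_amle (hST : amle S T) (hTS : amle T S) : maxels S = maxels T :=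
  ext fun _ => ⟨mem_maxels_of_amle hST hTS, mem_maxels_of_amle hTS hST⟩

variable {f : Finset ℕ → Finset ℕ → Finset ℕ}
  (hf : ∀ {A A' B B'}, A ⊆ A' → B ⊆ B' → f A B ⊆ f A' B')
include hf

lemma amle_image₂ {S' T' : Fam} (hS : amle S S') (hT : amle T T') :
    amle (image₂ f S T) (image₂ f S' T') := by
  intro D hD
  obtain ⟨A, hA, B, hB, rfl⟩ := mem_image₂.1 hD
  obtain ⟨A', hA', hAA'⟩ := hS A hA
  obtain ⟨B', hB', hBB'⟩ := hT B hB
  exact ⟨f A' B', mem_image₂_of_mem hA' hB', hf hAA' hBB'⟩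

lemma maxels_image₂_maxels_left :
    maxels (image₂ f (maxels S) T) = maxels (image₂ f S T) :=
  maxels_congr_of_amle (amle_of_subset (image₂_subset_right (maxels_subset S)))
    (amle_image₂ hf (amle_maxels S) (amle_of_subset subset_rfl))

lemma maxels_image₂_maxels_right :
    maxels (image₂ f S (maxels T)) = maxels (image₂ f S T) :=
  maxels_congr_of_amle (amle_of_subset (image₂_subset_left (maxels_subset T)))
    (amle_image₂ hf (amle_of_subset subset_rfl) (amle_maxels T))

end Maxels

section Xprod

variable {α β γ : Fam}

def xprodPre (α β : Fam) : Fam := image₂ (xprodCombine (sp α) (sp β)) α β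

lemma xprod_eq_maxels_xprodPre (α β : Fam) : xprod α β = maxels (xprodPre α β) := rfl

lemma xprodPre_comm (α β : Fam) : xprodPre α β = xprodPre β α := by
  rw [xprodPre, image₂_swap]
  simp only [xprodCombine_comm (sp α)]
  rfl

lemma xprod_comm (α β : Fam) : xprod α β = xprod β α := by
  rw [xprod_eq_maxels_xprodPre, xprodPre_comm]
  rfl

lemma sp_subset_sp_xprodPre (hβ : β.Nonempty) : sp α ⊆ sp (xprodPre α β) := by
  intro x hx
  obtain ⟨A, hA, hxA⟩ := mem_sp.1 hx
  obtain ⟨B, hB, hxB⟩ : ∃ B ∈ β, x ∈ B ∨ x ∉ sp β := by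
    by_cases hxβ : x ∈ sp β
    · obtain ⟨B, hB, hxB⟩ := mem_sp.1 hxβ
      exact ⟨B, hB, Or.inl hxB⟩
    · exact ⟨hβ.choose, hβ.choose_spec, Or.inr hxβ⟩
  exact mem_sp.2 ⟨_, mem_image₂_of_mem hA hB, mem_xprodCombine_left hxA hxB⟩

lemma sp_xprod (hα : α.Nonempty) (hβ : β.Nonempty) : sp (xprod α β) = sp α ∪ sp β := by
  rw [xprod_eq_maxels_xprodPre, sp_maxels]
  refine subset_antisymm (fun x hx => ?_) ?_
  · obtain ⟨D, hD, hxD⟩ := mem_sp.1 hx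
    obtain ⟨A, hA, B, hB, rfl⟩ := mem_image₂.1 hD
    exact union_subset_union (subset_sp hA) (subset_sp hB) (xprodCombine_subset_union _ _ _ _ hxD)
  · exact union_subset (sp_subset_sp_xprodPre hβ)
      (xprodPre_comm α β ▸ sp_subset_sp_xprodPre hα)

lemma xprod_xprod_left_eq_maxels (hα : α.Nonempty) (hβ : β.Nonempty) (γ : Fam) :
    xprod (xprod α β) γ =
      maxels (image₂ (xprodCombine (sp α ∪ sp β) (sp γ)) (xprodPre α β) γ) := by
  rw [xprod_eq_maxels_xprodPre (xprod α β), xprodPre, sp_xprod hα hβ]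
  exact maxels_image₂_maxels_left xprodCombine_mono

lemma xprod_xprod_right_eq_maxels (α : Fam) (hβ : β.Nonempty) (hγ : γ.Nonempty) :
    xprod α (xprod β γ) =
      maxels (image₂ (xprodCombine (sp α) (sp β ∪ sp γ)) α (xprodPre β γ)) := by
  rw [xprod_eq_maxels_xprodPre α, xprodPre, sp_xprod hβ hγ]
  exact maxels_image₂_maxels_right xprodCombine_mono

lemma xprod_assoc (hα : α.Nonempty) (hβ : β.Nonempty) (hγ : γ.Nonempty) :
    xprod (xprod α β) γ = xprod α (xprod β γ) := by
  rw [xprod_xprod_left_eq_maxels hα hβ, xprod_xprod_right_eq_maxels α hβ hγ, xprodPre, xprodPre]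
  exact congrArg maxels (image₂_assoc (xprodCombine_assoc _ _ _))

lemma xprod_singleton_empty (hα : ∀ A ∈ α, ∀ B ∈ α, A ⊆ B → A = B) :
    xprod α {∅} = α := by
  have hsp : sp ({∅} : Fam) = ∅ := by simp [sp]
  rw [xprod_eq_maxels_xprodPre, xprodPre, hsp, image₂_singleton_right]
  simpa using maxels_eq_self hα

lemma xprod_empty (α : Fam) : xprod α ∅ = ∅ := by
  rw [xprod_eq_maxels_xprodPre, xprodPre, image₂_empty_right]
  rfl

end Xprod

theorem xprod_comm_assoc_neutral_annihilator_general (N : Finset ℕ) (α β γ : Fam)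
    (hα : IsAC N α) :
    (α.Nonempty → β.Nonempty → xprod α β = xprod β α) ∧
    (α.Nonempty → β.Nonempty → γ.Nonempty →
      xprod (xprod α β) γ = xprod α (xprod β γ)) ∧
    xprod α ({(∅ : Finset ℕ)} : Fam) = α ∧
    xprod α (∅ : Fam) = (∅ : Fam) :=
  ⟨fun _ _ => xprod_comm α β, xprod_assoc, xprod_singleton_empty hα.2, xprod_empty α⟩

/-- the external product is commutative and associative on nonempty
antichains, has neutral element `{∅}` and annihilating element `∅`. -/
theorem xprod_comm_assoc_neutral_annihilator (N : Finset ℕ) (α β γ : Fam)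
    (hα : IsAC N α) (hβ : IsAC N β) (hγ : IsAC N γ) :
    (α.Nonempty → β.Nonempty → xprod α β = xprod β α) ∧
    (α.Nonempty → β.Nonempty → γ.Nonempty →
      xprod (xprod α β) γ = xprod α (xprod β γ)) ∧
    xprod α ({(∅ : Finset ℕ)} : Fam) = α ∧
    xprod α (∅ : Fam) = (∅ : Fam) :=
  xprod_comm_assoc_neutral_annihilator_general N α β γ hα
end

section
/- Interval counting recursion: for 1 ≤ n₁ < n, |AMT(1,n)| = 1 + Σ_{α ∈ AMT(1,n₁)\{∅}, β ∈ AMT(n₁+1,n)\{∅}} |[α ∨ β, α × β]|, where AMT(a,b) is the set of antichains of subsets of {a,...,b}. -/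
open Finset

/-!
Sending a nonempty antichain `κ` on `M₁ ∪ M₂` to its pair of projections `(κ|M₁, κ|M₂)` partitions
the nonempty antichains on `M₁ ∪ M₂` into fibres over pairs of nonempty antichains on `M₁` and `M₂`.
When `M₁` and `M₂` are disjoint, `α × β` consists of the maximal unions `a ∪ b`, and the fibre over
`(α, β)` is exactly the interval `[α ∨ β, α × β]`: the lower bound makes every member of `α` (and of
`β`) fit into a member of `κ`, the upper bound confines each member of `κ` to some `a ∪ b`, and these
two facts say precisely that `κ|M₁ = α` and `κ|M₂ = β`. The empty antichain accounts for the `1`.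
-/

section Maxels

variable {S κ : Fam} {A : Finset ℕ}

lemma mem_maxels : A ∈ maxels S ↔ A ∈ S ∧ ∀ B ∈ S, A ⊆ B → A = B := by
  simp [maxels]

lemma exists_mem_maxels_superset (hA : A ∈ S) : ∃ M ∈ maxels S, A ⊆ M := by
  obtain ⟨M, hM, hmax⟩ := (S.filter (A ⊆ ·)).exists_maximal ⟨A, by simp [hA]⟩
  rw [mem_filter] at hM
  refine ⟨M, mem_maxels.mpr ⟨hM.1, fun B hB hMB => ?_⟩, hM.2⟩
  exact hMB.antisymm (hmax (mem_filter.mpr ⟨hB, hM.2.trans hMB⟩) hMB)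

lemma amle_maxels_left_iff : amle (maxels S) κ ↔ amle S κ := by
  refine ⟨fun h B hB => ?_, fun h B hB => h B (mem_maxels.mp hB).1⟩
  obtain ⟨M, hM, hBM⟩ := exists_mem_maxels_superset hB
  obtain ⟨C, hC, hMC⟩ := h M hM
  exact ⟨C, hC, hBM.trans hMC⟩

lemma amle_maxels_right_iff : amle κ (maxels S) ↔ amle κ S := by
  refine ⟨fun h A hA => ?_, fun h A hA => ?_⟩
  · obtain ⟨B, hB, hAB⟩ := h A hA
    exact ⟨B, (mem_maxels.mp hB).1, hAB⟩
  · obtain ⟨B, hB, hAB⟩ := h A hA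
    obtain ⟨M, hM, hBM⟩ := exists_mem_maxels_superset hB
    exact ⟨M, hM, hAB.trans hBM⟩

lemma maxels_eq_of_amle {α : Fam} (hα : ∀ A ∈ α, ∀ B ∈ α, A ⊆ B → A = B)
    (hSα : amle S α) (hαS : amle α S) : maxels S = α := by
  ext M
  rw [mem_maxels]
  constructor
  · rintro ⟨hMS, hmax⟩
    obtain ⟨a, ha, hMa⟩ := hSα M hMS
    obtain ⟨B, hB, haB⟩ := hαS a ha
    obtain rfl : M = B := hmax B hB (hMa.trans haB)
    rwa [hMa.antisymm haB]
  · intro hM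
    have hmax : ∀ B ∈ S, M ⊆ B → M = B := by
      intro B hB hMB
      obtain ⟨a, ha, hBa⟩ := hSα B hB
      obtain rfl : M = a := hα M hM a ha (hMB.trans hBa)
      exact hMB.antisymm hBa
    obtain ⟨B, hB, hMB⟩ := hαS M hM
    exact ⟨hmax B hB hMB ▸ hB, hmax⟩

end Maxels

lemma mem_AMTf {N : Finset ℕ} {κ : Fam} : κ ∈ AMTf N ↔ IsAC N κ := by
  simp only [AMTf, mem_filter, mem_powerset, and_iff_right_iff_imp]
  exact fun h A hA => mem_powerset.mpr (h.1 A hA)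

lemma amle_union_iff {α β κ : Fam} : amle (α ∪ β) κ ↔ amle α κ ∧ amle β κ := by
  simp only [amle, mem_union, or_imp, forall_and]

section Proj

variable {M : Finset ℕ} {κ : Fam}

lemma isAC_proj : IsAC M (proj M κ) := by
  refine ⟨fun A hA => ?_, fun A hA B hB => (mem_maxels.mp hA).2 B (mem_maxels.mp hB).1⟩
  obtain ⟨B, -, rfl⟩ := mem_image.mp (mem_maxels.mp hA).1
  exact inter_subset_right

lemma proj_ne_empty (h : κ ≠ ∅) : proj M κ ≠ ∅ := by
  obtain ⟨A, hA⟩ := nonempty_iff_ne_empty.mpr h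
  obtain ⟨B, hB, -⟩ := exists_mem_maxels_superset (mem_image_of_mem (· ∩ M) hA)
  exact ne_empty_of_mem hB

lemma proj_amle : amle (proj M κ) κ := by
  rw [proj, amle_maxels_left_iff]
  intro B hB
  obtain ⟨A, hA, rfl⟩ := mem_image.mp hB
  exact ⟨A, hA, inter_subset_left⟩

lemma exists_mem_proj_superset_inter {A : Finset ℕ} (hA : A ∈ κ) :
    ∃ a ∈ proj M κ, A ∩ M ⊆ a :=
  exists_mem_maxels_superset (mem_image_of_mem _ hA)

end Proj

lemma xprod_eq_maxels_union {α β : Fam} (hd : Disjoint (sp α) (sp β)) :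
    xprod α β = maxels ((α ×ˢ β).image fun p => p.1 ∪ p.2) := by
  rw [xprod]
  congr 1
  refine image_congr fun p hp => ?_
  obtain ⟨ha, hb⟩ := mem_product.mp hp
  have ha' : Disjoint p.1 (sp β) := hd.mono_left (le_sup (f := id) ha)
  have hb' : Disjoint p.2 (sp α) := hd.symm.mono_left (le_sup (f := id) hb)
  have hab : p.1 ∩ p.2 = ∅ := disjoint_iff_inter_eq_empty.mp (hd.mono (le_sup (f := id) ha)
    (le_sup (f := id) hb))
  simp only [ha'.sdiff_eq_left, hb'.sdiff_eq_left, hab, union_empty]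

lemma amle_xprod_iff {α β κ : Fam} (hd : Disjoint (sp α) (sp β)) :
    amle κ (xprod α β) ↔ ∀ A ∈ κ, ∃ a ∈ α, ∃ b ∈ β, A ⊆ a ∪ b := by
  rw [xprod_eq_maxels_union hd, amle_maxels_right_iff]
  simp only [amle, mem_image, mem_product]
  constructor
  · rintro h A hA
    obtain ⟨_, ⟨p, ⟨ha, hb⟩, rfl⟩, hA'⟩ := h A hA
    exact ⟨p.1, ha, p.2, hb, hA'⟩
  · rintro h A hA
    obtain ⟨a, ha, b, hb, hA'⟩ := h A hA
    exact ⟨a ∪ b, ⟨(a, b), ⟨ha, hb⟩, rfl⟩, hA'⟩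

lemma sp_subset_of_isAC {N : Finset ℕ} {α : Fam} (h : IsAC N α) : sp α ⊆ N :=
  Finset.sup_le fun A hA => h.1 A hA

section Interval

variable {M₁ M₂ : Finset ℕ} {α β κ : Fam}

lemma proj_eq_of_amle (hd : Disjoint M₁ M₂) (hα : IsAC M₁ α) (hβ : IsAC M₂ β)
    (hακ : amle α κ) (hκ : ∀ A ∈ κ, ∃ a ∈ α, ∃ b ∈ β, A ⊆ a ∪ b) : proj M₁ κ = α := by
  refine maxels_eq_of_amle hα.2 (fun s hs => ?_) (fun a ha => ?_)
  · obtain ⟨A, hA, rfl⟩ := mem_image.mp hs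
    obtain ⟨a, ha, b, hb, hAab⟩ := hκ A hA
    refine ⟨a, ha, fun x hx => ?_⟩
    obtain ⟨hxA, hxM⟩ := mem_inter.mp hx
    exact (mem_union.mp (hAab hxA)).resolve_right
      fun hxb => disjoint_left.mp hd hxM (hβ.1 b hb hxb)
  · obtain ⟨A, hA, haA⟩ := hακ a ha
    exact ⟨A ∩ M₁, mem_image_of_mem _ hA, subset_inter haA (hα.1 a ha)⟩

lemma mem_intervalF_joinAC_xprod_proj (hd : Disjoint M₁ M₂) (hκ : IsAC (M₁ ∪ M₂) κ) :
    κ ∈ intervalF (M₁ ∪ M₂) (joinAC (proj M₁ κ) (proj M₂ κ)) (xprod (proj M₁ κ) (proj M₂ κ)) := by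
  have hsp : Disjoint (sp (proj M₁ κ)) (sp (proj M₂ κ)) :=
    hd.mono (sp_subset_of_isAC isAC_proj) (sp_subset_of_isAC isAC_proj)
  refine mem_filter.mpr ⟨mem_AMTf.mpr hκ, ?_, (amle_xprod_iff hsp).mpr fun A hA => ?_⟩
  · rw [joinAC, amle_maxels_left_iff, amle_union_iff]
    exact ⟨proj_amle, proj_amle⟩
  · obtain ⟨a, ha, h₁⟩ := exists_mem_proj_superset_inter (M := M₁) hA
    obtain ⟨b, hb, h₂⟩ := exists_mem_proj_superset_inter (M := M₂) hA
    refine ⟨a, ha, b, hb, fun x hx => ?_⟩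
    rcases mem_union.mp (hκ.1 A hA hx) with h | h
    · exact mem_union_left _ (h₁ (mem_inter.mpr ⟨hx, h⟩))
    · exact mem_union_right _ (h₂ (mem_inter.mpr ⟨hx, h⟩))

lemma proj_eq_of_mem_intervalF (hd : Disjoint M₁ M₂) (hα : IsAC M₁ α) (hβ : IsAC M₂ β)
    (hκ : κ ∈ intervalF (M₁ ∪ M₂) (joinAC α β) (xprod α β)) :
    proj M₁ κ = α ∧ proj M₂ κ = β := by
  obtain ⟨-, hjoin, hx⟩ := mem_filter.mp hκ
  rw [joinAC, amle_maxels_left_iff, amle_union_iff] at hjoin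
  rw [amle_xprod_iff (hd.mono (sp_subset_of_isAC hα) (sp_subset_of_isAC hβ))] at hx
  refine ⟨proj_eq_of_amle hd hα hβ hjoin.1 hx, proj_eq_of_amle hd.symm hβ hα hjoin.2 ?_⟩
  intro A hA
  obtain ⟨a, ha, b, hb, hAab⟩ := hx A hA
  exact ⟨b, hb, a, ha, union_comm a b ▸ hAab⟩

end Interval

theorem card_AMTf_union (M₁ M₂ : Finset ℕ) (hd : Disjoint M₁ M₂) :
    #(AMTf (M₁ ∪ M₂)) =
      1 + ∑ α ∈ (AMTf M₁).erase ∅, ∑ β ∈ (AMTf M₂).erase ∅,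
        #(intervalF (M₁ ∪ M₂) (joinAC α β) (xprod α β)) := by
  have hempty : (∅ : Fam) ∈ AMTf (M₁ ∪ M₂) := mem_AMTf.mpr ⟨by simp, by simp⟩
  have hmaps : ∀ κ ∈ (AMTf (M₁ ∪ M₂)).erase ∅,
      (proj M₁ κ, proj M₂ κ) ∈ (AMTf M₁).erase ∅ ×ˢ (AMTf M₂).erase ∅ := by
    intro κ hκ
    have hne := (mem_erase.mp hκ).1
    exact mem_product.mpr ⟨mem_erase.mpr ⟨proj_ne_empty hne, mem_AMTf.mpr isAC_proj⟩,
      mem_erase.mpr ⟨proj_ne_empty hne, mem_AMTf.mpr isAC_proj⟩⟩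
  rw [← card_erase_add_one hempty, add_comm, card_eq_sum_card_fiberwise hmaps, sum_product]
  refine congrArg _ (sum_congr rfl fun α hα => sum_congr rfl fun β hβ => congrArg _ ?_)
  obtain ⟨hα0, hα⟩ := mem_erase.mp hα
  obtain ⟨-, hβ⟩ := mem_erase.mp hβ
  rw [mem_AMTf] at hα hβ
  ext κ
  simp only [mem_filter, mem_erase, Prod.mk.injEq]
  constructor
  · rintro ⟨⟨-, hκ⟩, rfl, rfl⟩
    exact mem_intervalF_joinAC_xprod_proj hd (mem_AMTf.mp hκ)
  · intro hκ
    obtain ⟨e₁, e₂⟩ := proj_eq_of_mem_intervalF hd hα hβ hκ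
    refine ⟨⟨?_, (mem_filter.mp hκ).1⟩, e₁, e₂⟩
    rintro rfl
    rw [← e₁] at hα0
    exact hα0 (by simp [proj, maxels])

theorem interval_recursion_general (n n₁ : ℕ) (h2 : n₁ < n) :
    (AMTf (Finset.Icc 1 n)).card =
      1 + ∑ α ∈ (AMTf (Finset.Icc 1 n₁)).erase (∅ : Fam),
            ∑ β ∈ (AMTf (Finset.Icc (n₁ + 1) n)).erase (∅ : Fam),
              (intervalF (Finset.Icc 1 n) (joinAC α β) (xprod α β)).card := by
  have hd : Disjoint (Icc 1 n₁) (Icc (n₁ + 1) n) :=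
    disjoint_left.mpr fun x hx hx' => by rw [mem_Icc] at hx hx'; omega
  have hU : Icc 1 n₁ ∪ Icc (n₁ + 1) n = Icc 1 n := by
    ext x
    simp only [mem_union, mem_Icc]
    omega
  rw [← hU]
  exact card_AMTf_union _ _ hd

/-- interval counting recursion. -/
theorem interval_recursion (n n₁ : ℕ) (h1 : 1 ≤ n₁) (h2 : n₁ < n) :
    (AMTf (Finset.Icc 1 n)).card =
      1 + ∑ α ∈ (AMTf (Finset.Icc 1 n₁)).erase (∅ : Fam),
            ∑ β ∈ (AMTf (Finset.Icc (n₁ + 1) n)).erase (∅ : Fam),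
              (intervalF (Finset.Icc 1 n) (joinAC α β) (xprod α β)).card :=
  interval_recursion_general n n₁ h2
end
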